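/- ($\ell_2$ eluder lemma) Suppose $\{w_t\}_{t\in[T]} \subset \mathbb{R}^d$, $\{x_{t,i}\}_{(t,i)\in[T]\times[I]} \subset \mathbb{R}^d$, and $\{p_t \in \Delta_{[I]}\}_{t\in[T]}$ satisfy, for all $t\in[T]$: (i) $\sum_{s=1}^{t-1}\sum_{i=1}^I p_s(i)\,|w_t^\top x_{s,i}|^2 \le \gamma_t$; (ii) $\sum_{i=1}^I p_t(i)\,\|x_{t,i}\|_2^2 \le R_x^2$; (iii) $\|w_t\|_2 \le R_w$. Then for any $R > 0$, $\sum_{t=1}^T \min\left\{R, \sum_{i=1}^I p_t(i)\,|w_t^\top x_{t,i}|\right\} \le \sqrt{2d\left(R^2 T + \sum_{t=1}^T \gamma_t\right) \log\left(1 + \frac{T R_x^2 R_w^2}{R^2}\right)}$. -/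

import Mathlib

/-!
Put `B_t = ∑ᵢ p_t(i) x_{t,i} x_{t,i}ᵀ`, `Σ_t = λ I + ∑_{s<t} B_s` with `λ = R² / R_w²`, and
`u_t = tr(Σ_t⁻¹ B_t) = ∑ᵢ p_t(i) x_{t,i}ᵀ Σ_t⁻¹ x_{t,i}`. Cauchy–Schwarz in the geometry of `Σ_t`
bounds the `t`-th term by `√((R² + γ_t) u_t)`, since `w_tᵀ Σ_t w_t ≤ λ R_w² + γ_t`; capping at `R`
replaces `u_t` by `min(1, u_t) ≤ 2 log(1 + u_t)`. The determinant inequality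
`det(Σ + B) ≥ det Σ · (1 + tr(Σ⁻¹ B))` telescopes to `λ^d ∏_t (1 + u_t) ≤ det Σ_{T+1}`, and every
eigenvalue of `Σ_{T+1}` is at most `λ + T R_x²`, which bounds `∑_t log(1 + u_t)` by
`d log(1 + T R_x² / λ)`.
A last Cauchy–Schwarz over `t` combines the two sums.
-/

open Matrix Finset
open scoped RealInnerProductSpace

theorem Finset.one_add_sum_le_prod_one_add {ι : Type*} (s : Finset ι) {f : ι → ℝ}
    (hf : ∀ i ∈ s, 0 ≤ f i) : 1 + ∑ i ∈ s, f i ≤ ∏ i ∈ s, (1 + f i) := by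
  classical
  induction s using Finset.induction_on with
  | empty => simp
  | insert a s ha ih =>
    rw [sum_insert ha, prod_insert ha]
    have hs := ih fun i hi => hf i (mem_insert_of_mem hi)
    have hfa := hf a (mem_insert_self a s)
    nlinarith [sum_nonneg fun i hi => hf i (mem_insert_of_mem hi)]

theorem Real.min_one_le_two_mul_log_one_add {u : ℝ} (hu : 0 ≤ u) :
    min 1 u ≤ 2 * Real.log (1 + u) := by
  have hlog : u / (1 + u) ≤ Real.log (1 + u) := by
    have h := Real.one_sub_inv_le_log_of_pos (by linarith : 0 < 1 + u)
    rwa [show 1 - (1 + u)⁻¹ = u / (1 + u) by field_simp; ring] at h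
  have hmin : min 1 u ≤ 2 * (u / (1 + u)) := by
    rw [mul_div_assoc', le_div_iff₀ (by linarith)]
    rcases le_total u 1 with hu1 | hu1
    · rw [min_eq_right hu1]; nlinarith
    · rw [min_eq_left hu1]; linarith
  linarith

theorem min_le_sqrt_mul_min_one {R a K u : ℝ} (hRK : R ^ 2 ≤ K) (ha : a ≤ √(K * u)) :
    min R a ≤ √(K * min 1 u) := by
  rcases le_total u 1 with hu | hu
  · rw [min_eq_right hu]; exact (min_le_right _ _).trans ha
  · rw [min_eq_left hu, mul_one]
    exact (min_le_left _ _).trans ((le_abs_self R).trans (Real.abs_le_sqrt hRK))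

namespace Matrix

section Spectral

variable {n : Type*} [Fintype n] [DecidableEq n] {A B M : Matrix n n ℝ}

theorem IsHermitian.det_smul_one_add (hM : M.IsHermitian) (c : ℝ) :
    (c • 1 + M).det = ∏ i, (c + hM.eigenvalues i) := by
  set U := hM.eigenvectorUnitary
  have hc : c • (1 : Matrix n n ℝ) = Unitary.conjStarAlgAut ℝ _ U (c • 1) := by simp
  have hspec :
      c • 1 + M = Unitary.conjStarAlgAut ℝ _ U (diagonal fun i => c + hM.eigenvalues i) := by
    conv_lhs => rw [hc, hM.spectral_theorem]
    rw [← map_add, smul_one_eq_diagonal, diagonal_add]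
    rfl
  rw [hspec, Unitary.conjStarAlgAut_apply, det_mul, det_mul, mul_comm, ← mul_assoc, ← det_mul,
    Unitary.coe_star_mul_self, det_one, one_mul, det_diagonal]

theorem PosSemidef.one_add_trace_le_det_one_add (hM : M.PosSemidef) :
    1 + M.trace ≤ (1 + M).det := by
  simpa [hM.1.trace_eq_sum_eigenvalues, ← hM.1.det_smul_one_add] using
    Finset.one_add_sum_le_prod_one_add univ fun i _ => hM.eigenvalues_nonneg i

theorem PosSemidef.det_smul_one_add_le (hM : M.PosSemidef) {c : ℝ} (hc : 0 ≤ c) :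
    (c • 1 + M).det ≤ (c + M.trace) ^ Fintype.card n := by
  rw [hM.1.det_smul_one_add, hM.1.trace_eq_sum_eigenvalues, ← card_univ, ← prod_const]
  refine prod_le_prod (fun i _ => add_nonneg hc (hM.eigenvalues_nonneg i)) fun i _ => ?_
  simpa using single_le_sum (fun j _ => hM.eigenvalues_nonneg j) (mem_univ i)

-- `M = A^{-1/2} B A^{-1/2}`, so that `A + B = A^{1/2} (1 + M) A^{1/2}`.
open scoped MatrixOrder in
theorem PosDef.exists_posSemidef_det_add_eq (hA : A.PosDef) (hB : B.PosSemidef) :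
    ∃ M : Matrix n n ℝ, M.PosSemidef ∧ M.trace = (A⁻¹ * B).trace ∧
      (A + B).det = A.det * (1 + M).det := by
  set S := CFC.sqrt A
  have hS : S.PosSemidef := (CFC.sqrt_nonneg A).posSemidef
  have hSS : S * S = A := CFC.sqrt_mul_sqrt_self A hA.posSemidef.nonneg
  have hSu : IsUnit S.det :=
    (isUnit_iff_isUnit_det S).mp (isUnit_of_mul_isUnit_left (hSS ▸ hA.isUnit))
  refine ⟨S⁻¹ * B * S⁻¹, ?_, ?_, ?_⟩
  · have h := hB.mul_mul_conjTranspose_same S⁻¹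
    rwa [hS.inv.1.eq] at h
  · rw [trace_mul_cycle, ← hSS, mul_inv_rev]
  · have hfac : A + B = S * (1 + S⁻¹ * B * S⁻¹) * S := by
      rw [mul_add, add_mul, mul_one, hSS, ← mul_assoc, ← mul_assoc, mul_nonsing_inv _ hSu,
        one_mul, mul_assoc, nonsing_inv_mul _ hSu, mul_one]
    rw [hfac, ← hSS, det_mul, det_mul, det_mul]
    ring

theorem PosDef.trace_inv_mul_nonneg (hA : A.PosDef) (hB : B.PosSemidef) :
    0 ≤ (A⁻¹ * B).trace := by
  obtain ⟨M, hM, htr, -⟩ := hA.exists_posSemidef_det_add_eq hB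
  exact htr ▸ hM.trace_nonneg

theorem PosDef.det_mul_one_add_trace_le_det_add (hA : A.PosDef) (hB : B.PosSemidef) :
    A.det * (1 + (A⁻¹ * B).trace) ≤ (A + B).det := by
  obtain ⟨M, hM, htr, hdet⟩ := hA.exists_posSemidef_det_add_eq hB
  rw [hdet, ← htr]
  exact mul_le_mul_of_nonneg_left hM.one_add_trace_le_det_one_add hA.det_pos.le

end Spectral

section CauchySchwarz

variable {n : Type*} [Fintype n] {A : Matrix n n ℝ}

theorem PosSemidef.sq_dotProduct_mulVec_le (hA : A.PosSemidef) (x y : n → ℝ) :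
    (x ⬝ᵥ (A *ᵥ y)) ^ 2 ≤ (x ⬝ᵥ (A *ᵥ x)) * (y ⬝ᵥ (A *ᵥ y)) := by
  let := A.toSeminormedAddCommGroup hA
  let := A.toInnerProductSpace hA
  have hinner : ∀ u v : n → ℝ, (inner ℝ u v : ℝ) = u ⬝ᵥ (A *ᵥ v) := fun u v => by
    rw [dotProduct_comm]; rfl
  have h := real_inner_mul_inner_self_le x y
  simp only [hinner] at h
  rwa [sq]

theorem PosDef.sq_dotProduct_le [DecidableEq n] (hA : A.PosDef) (w x : n → ℝ) :
    (w ⬝ᵥ x) ^ 2 ≤ (w ⬝ᵥ (A *ᵥ w)) * (x ⬝ᵥ (A⁻¹ *ᵥ x)) := by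
  have h := hA.posSemidef.sq_dotProduct_mulVec_le w (A⁻¹ *ᵥ x)
  rwa [mulVec_mulVec, mul_nonsing_inv _ (hA.isUnit.map detMonoidHom), one_mulVec,
    dotProduct_comm (A⁻¹ *ᵥ x)] at h

end CauchySchwarz

section SecondMoment

variable {n ι : Type*} [Fintype n] [Fintype ι]

def secondMoment (p : ι → ℝ) (x : ι → n → ℝ) : Matrix n n ℝ :=
  ∑ i, p i • vecMulVec (x i) (x i)

variable {p : ι → ℝ} {x : ι → n → ℝ}

theorem posSemidef_secondMoment (hp : ∀ i, 0 ≤ p i) : (secondMoment p x).PosSemidef :=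
  posSemidef_sum _ fun i _ => (posSemidef_vecMulVec_self_star (x i)).smul (hp i)

theorem dotProduct_secondMoment_mulVec (y : n → ℝ) :
    y ⬝ᵥ (secondMoment p x *ᵥ y) = ∑ i, p i * (x i ⬝ᵥ y) ^ 2 := by
  simp only [secondMoment, sum_mulVec, dotProduct_sum, smul_mulVec, dotProduct_smul,
    vecMulVec_mulVec, op_smul_eq_smul, smul_eq_mul]
  exact sum_congr rfl fun i _ => by rw [dotProduct_comm y, sq]

theorem trace_mul_secondMoment (A : Matrix n n ℝ) :
    (A * secondMoment p x).trace = ∑ i, p i * (x i ⬝ᵥ (A *ᵥ x i)) := by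
  simp only [secondMoment, mul_sum, trace_sum, Matrix.mul_smul, trace_smul, mul_vecMulVec,
    trace_vecMulVec, smul_eq_mul, dotProduct_comm (A *ᵥ _)]

theorem trace_secondMoment : (secondMoment p x).trace = ∑ i, p i * (x i ⬝ᵥ x i) := by
  simp only [secondMoment, trace_sum, trace_smul, trace_vecMulVec, smul_eq_mul]

theorem PosDef.sq_sum_mul_abs_dotProduct_le [DecidableEq n] {A : Matrix n n ℝ} (hA : A.PosDef)
    (hp0 : ∀ i, 0 ≤ p i) (hp1 : ∑ i, p i = 1) (w : n → ℝ) :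
    (∑ i, p i * |x i ⬝ᵥ w|) ^ 2 ≤ (w ⬝ᵥ (A *ᵥ w)) * (A⁻¹ * secondMoment p x).trace := by
  have hQ : 0 ≤ w ⬝ᵥ (A *ᵥ w) := by simpa using hA.posSemidef.dotProduct_mulVec_nonneg w
  have hv : ∀ i, 0 ≤ x i ⬝ᵥ (A⁻¹ *ᵥ x i) := fun i => by
    simpa using hA.inv.posSemidef.dotProduct_mulVec_nonneg (x i)
  have h := sum_sq_le_sum_mul_sum_of_sq_le_mul univ (r := fun i => p i * |x i ⬝ᵥ w|)
    (g := fun i => w ⬝ᵥ (A *ᵥ w) * (p i * (x i ⬝ᵥ (A⁻¹ *ᵥ x i)))) (fun i _ => hp0 i)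
    (fun i _ => mul_nonneg hQ (mul_nonneg (hp0 i) (hv i))) fun i _ => by
      have hcs := hA.sq_dotProduct_le w (x i)
      rw [dotProduct_comm] at hcs
      calc (p i * |x i ⬝ᵥ w|) ^ 2 = p i * (p i * (x i ⬝ᵥ w) ^ 2) := by
            rw [mul_pow, sq_abs]; ring
        _ ≤ p i * (p i * ((w ⬝ᵥ (A *ᵥ w)) * (x i ⬝ᵥ (A⁻¹ *ᵥ x i)))) := by
            gcongr <;> exact hp0 i
        _ = _ := by ring
  rwa [hp1, one_mul, ← mul_sum, ← trace_mul_secondMoment] at h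

end SecondMoment

section EllipticalPotential

variable {n : Type*} [DecidableEq n] {lam : ℝ}

def designMatrix {T : ℕ} (lam : ℝ) (B : Fin T → Matrix n n ℝ) (t : Fin T) : Matrix n n ℝ :=
  lam • 1 + ∑ s ∈ univ.filter (· < t), B s

theorem designMatrix_castSucc {T : ℕ} {B : Fin (T + 1) → Matrix n n ℝ} (t : Fin T) :
    designMatrix lam B t.castSucc = designMatrix lam (fun s => B s.castSucc) t := by
  simp [designMatrix, sum_filter, Fin.sum_univ_castSucc, (Fin.castSucc_lt_last t).not_gt]

theorem designMatrix_last {T : ℕ} {B : Fin (T + 1) → Matrix n n ℝ} :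
    designMatrix lam B (Fin.last T) = lam • 1 + ∑ s : Fin T, B s.castSucc := by
  simp [designMatrix, sum_filter, Fin.sum_univ_castSucc, Fin.castSucc_lt_last]

theorem dotProduct_designMatrix_mulVec [Fintype n] {T : ℕ} (B : Fin T → Matrix n n ℝ)
    (t : Fin T) (y : n → ℝ) :
    y ⬝ᵥ (designMatrix lam B t *ᵥ y)
      = lam * (y ⬝ᵥ y) + ∑ s ∈ univ.filter (· < t), y ⬝ᵥ (B s *ᵥ y) := by
  simp [designMatrix, add_mulVec, smul_mulVec, sum_mulVec, dotProduct_sum]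

theorem posDef_smul_one_add_sum [Fintype n] {ι : Type*} (hlam : 0 < lam) (s : Finset ι)
    {B : ι → Matrix n n ℝ} (hB : ∀ i ∈ s, (B i).PosSemidef) :
    (lam • 1 + ∑ i ∈ s, B i).PosDef :=
  (PosDef.one.smul hlam).add_posSemidef (posSemidef_sum s hB)

variable [Fintype n]

theorem posDef_designMatrix {T : ℕ} (hlam : 0 < lam) {B : Fin T → Matrix n n ℝ}
    (hB : ∀ t, (B t).PosSemidef) (t : Fin T) : (designMatrix lam B t).PosDef :=
  posDef_smul_one_add_sum hlam _ fun s _ => hB s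

theorem pow_card_mul_prod_one_add_trace_le_det (hlam : 0 < lam) {T : ℕ}
    (B : Fin T → Matrix n n ℝ) (hB : ∀ t, (B t).PosSemidef) :
    lam ^ Fintype.card n * ∏ t, (1 + ((designMatrix lam B t)⁻¹ * B t).trace)
      ≤ (lam • 1 + ∑ t, B t).det := by
  induction T with
  | zero => simp
  | succ T ih =>
    have hA := posDef_smul_one_add_sum hlam univ fun s _ => hB (Fin.castSucc s)
    rw [Fin.prod_univ_castSucc, Fin.sum_univ_castSucc, ← add_assoc, ← mul_assoc]
    simp only [designMatrix_castSucc, designMatrix_last]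
    calc _ ≤ (lam • 1 + ∑ s : Fin T, B s.castSucc).det * (1 + _) :=
          mul_le_mul_of_nonneg_right (ih _ fun t => hB _)
            (by linarith [hA.trace_inv_mul_nonneg (hB (Fin.last T))])
      _ ≤ _ := hA.det_mul_one_add_trace_le_det_add (hB _)

theorem sum_log_one_add_trace_le (hlam : 0 < lam) {T : ℕ} (B : Fin T → Matrix n n ℝ)
    (hB : ∀ t, (B t).PosSemidef) {c : ℝ} (hc : ∀ t, (B t).trace ≤ c) :
    ∑ t, Real.log (1 + ((designMatrix lam B t)⁻¹ * B t).trace)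
      ≤ Fintype.card n * Real.log (1 + T * c / lam) := by
  have hu : ∀ t, 0 < 1 + ((designMatrix lam B t)⁻¹ * B t).trace := fun t => by
    linarith [(posDef_designMatrix hlam hB t).trace_inv_mul_nonneg (hB t)]
  have hsum := posSemidef_sum univ fun t _ => hB t
  have htr : (∑ t, B t).trace ≤ T * c := by
    simpa [trace_sum] using sum_le_sum fun t (_ : t ∈ univ) => hc t
  have hdet : lam ^ Fintype.card n * ∏ t, (1 + ((designMatrix lam B t)⁻¹ * B t).trace)
      ≤ lam ^ Fintype.card n * (1 + T * c / lam) ^ Fintype.card n := by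
    calc _ ≤ (lam • 1 + ∑ t, B t).det := pow_card_mul_prod_one_add_trace_le_det hlam B hB
      _ ≤ (lam + (∑ t, B t).trace) ^ Fintype.card n := hsum.det_smul_one_add_le hlam.le
      _ ≤ (lam + T * c) ^ Fintype.card n := by
          gcongr
          linarith [hsum.trace_nonneg]
      _ = _ := by rw [← mul_pow]; field_simp
  rw [← Real.log_prod fun t _ => (hu t).ne', ← Real.log_pow]
  exact Real.log_le_log (prod_pos fun t _ => hu t)
    (le_of_mul_le_mul_left hdet (pow_pos hlam _))

end EllipticalPotential

theorem sum_min_sum_mul_abs_dotProduct_le {n ι : Type*} [Fintype n] [DecidableEq n]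
    [Fintype ι] {T : ℕ} (w : Fin T → n → ℝ) (x : Fin T → ι → n → ℝ) (p : Fin T → ι → ℝ)
    (hp0 : ∀ t i, 0 ≤ p t i) (hp1 : ∀ t, ∑ i, p t i = 1) (γ : Fin T → ℝ) {lam c R : ℝ}
    (hlam : 0 < lam)
    (h1 : ∀ t, ∑ s ∈ univ.filter (· < t), ∑ i, p s i * (x s i ⬝ᵥ w t) ^ 2 ≤ γ t)
    (h2 : ∀ t, ∑ i, p t i * (x t i ⬝ᵥ x t i) ≤ c)
    (h3 : ∀ t, lam * (w t ⬝ᵥ w t) ≤ R ^ 2) :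
    ∑ t, min R (∑ i, p t i * |x t i ⬝ᵥ w t|)
      ≤ √(2 * Fintype.card n * (R ^ 2 * T + ∑ t, γ t) * Real.log (1 + T * c / lam)) := by
  set B : Fin T → Matrix n n ℝ := fun t => secondMoment (p t) (x t)
  have hB : ∀ t, (B t).PosSemidef := fun t => posSemidef_secondMoment (hp0 t)
  set u : Fin T → ℝ := fun t => ((designMatrix lam B t)⁻¹ * B t).trace
  have hu : ∀ t, 0 ≤ u t := fun t => (posDef_designMatrix hlam hB t).trace_inv_mul_nonneg (hB t)
  have hγ : ∀ t, 0 ≤ γ t := fun t => (sum_nonneg fun s _ => sum_nonneg fun i _ =>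
    mul_nonneg (hp0 s i) (sq_nonneg _)).trans (h1 t)
  have hround : ∀ t, (∑ i, p t i * |x t i ⬝ᵥ w t|) ^ 2 ≤ (R ^ 2 + γ t) * u t := fun t => by
    refine ((posDef_designMatrix hlam hB t).sq_sum_mul_abs_dotProduct_le (hp0 t) (hp1 t) _).trans
      (mul_le_mul_of_nonneg_right ?_ (hu t))
    simp only [dotProduct_designMatrix_mulVec, B, dotProduct_secondMoment_mulVec]
    linarith [h1 t, h3 t]
  have hpot : ∑ t, min 1 (u t) ≤ 2 * (Fintype.card n * Real.log (1 + T * c / lam)) := by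
    refine (sum_le_sum fun t _ => Real.min_one_le_two_mul_log_one_add (hu t)).trans ?_
    rw [← mul_sum]
    gcongr
    exact sum_log_one_add_trace_le hlam B hB fun t => trace_secondMoment.trans_le (h2 t)
  have hK : ∀ t, 0 ≤ R ^ 2 + γ t := fun t => by linarith [hγ t, sq_nonneg R]
  calc ∑ t, min R (∑ i, p t i * |x t i ⬝ᵥ w t|)
      ≤ ∑ t, √(R ^ 2 + γ t) * √(min 1 (u t)) := sum_le_sum fun t _ => by
        rw [← Real.sqrt_mul (hK t)]
        exact min_le_sqrt_mul_min_one (by linarith [hγ t]) (Real.le_sqrt_of_sq_le (hround t))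
    _ ≤ √(∑ t, (R ^ 2 + γ t)) * √(∑ t, min 1 (u t)) :=
        Real.sum_sqrt_mul_sqrt_le _ hK fun t => le_min zero_le_one (hu t)
    _ ≤ √(R ^ 2 * T + ∑ t, γ t) * √(2 * (Fintype.card n * Real.log (1 + T * c / lam))) := by
        rw [sum_add_distrib, sum_const, card_univ, Fintype.card_fin, nsmul_eq_mul,
          mul_comm (T : ℝ)]
        gcongr
    _ = _ := by
        rw [← Real.sqrt_mul (add_nonneg (by positivity) (sum_nonneg fun t _ => hγ t))]
        ring_nf

end Matrix

theorem stmt_13 (d T I : ℕ)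
    (w : Fin T → EuclideanSpace ℝ (Fin d))
    (x : Fin T → Fin I → EuclideanSpace ℝ (Fin d))
    (p : Fin T → Fin I → ℝ) (hp0 : ∀ t i, 0 ≤ p t i) (hp1 : ∀ t, ∑ i, p t i = 1)
    (γ : Fin T → ℝ) (Rx Rw : ℝ)
    (h1 : ∀ t, ∑ s ∈ Finset.univ.filter (· < t), ∑ i, p s i * ⟪w t, x s i⟫ ^ 2 ≤ γ t)
    (h2 : ∀ t, ∑ i, p t i * ‖x t i‖ ^ 2 ≤ Rx ^ 2)
    (h3 : ∀ t, ‖w t‖ ≤ Rw)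
    (R : ℝ) (hR : 0 < R) :
    ∑ t, min R (∑ i, p t i * |⟪w t, x t i⟫|)
      ≤ Real.sqrt (2 * d * (R ^ 2 * T + ∑ t, γ t)
          * Real.log (1 + T * Rx ^ 2 * Rw ^ 2 / R ^ 2)) := by
  rcases le_or_gt Rw 0 with hRw | hRw
  · have hw : ∀ t, w t = 0 := fun t => norm_le_zero_iff.mp ((h3 t).trans hRw)
    simp only [hw, inner_zero_left, abs_zero, mul_zero, sum_const_zero, min_eq_right hR.le]
    exact Real.sqrt_nonneg _
  have hinner : ∀ u v : EuclideanSpace ℝ (Fin d), ⟪u, v⟫ = v.ofLp ⬝ᵥ u.ofLp := fun u v => by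
    simp [EuclideanSpace.inner_eq_star_dotProduct]
  have hnorm : ∀ v : EuclideanSpace ℝ (Fin d), ‖v‖ ^ 2 = v.ofLp ⬝ᵥ v.ofLp := fun v => by
    rw [← real_inner_self_eq_norm_sq, hinner]
  have hlam : T * Rx ^ 2 / (R ^ 2 / Rw ^ 2) = T * Rx ^ 2 * Rw ^ 2 / R ^ 2 := by
    field_simp
  have key := sum_min_sum_mul_abs_dotProduct_le (fun t => (w t).ofLp) (fun t i => (x t i).ofLp)
    p hp0 hp1 γ (lam := R ^ 2 / Rw ^ 2) (c := Rx ^ 2) (R := R) (by positivity)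
    (by simpa only [hinner] using h1) (fun t => by simpa only [hnorm] using h2 t) fun t => by
      rw [← hnorm, div_mul_comm]
      exact mul_le_of_le_one_left (sq_nonneg R) ((div_le_one (by positivity)).mpr
        (pow_le_pow_left₀ (norm_nonneg _) (h3 t) 2))
  simpa only [hinner, Fintype.card_fin, hlam] using key
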